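/- arXiv:2008.05916 — 2 statements merged into one kernel-verified Lean document; each statement's English description precedes it below -/
import Mathlib

section
/- The map from ℕ×ℕ to ℕ×ℕ sending (i, j) to (i² + j, i + j²) is injective on positive integers. -/
/-- The map `(i,j) ↦ (i² + j, i + j²)` is injective on pairs of positive integers. -/
theorem nonlinear_links_pair_injective :
    Set.InjOn (fun p : ℕ × ℕ => (p.1 ^ 2 + p.2, p.1 + p.2 ^ 2))
      {p : ℕ × ℕ | 0 < p.1 ∧ 0 < p.2} := by
  rintro ⟨i, j⟩ ⟨hi, hj⟩ ⟨a, b⟩ ⟨ha, hb⟩ h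
  simp only [Prod.mk.injEq] at h ⊢
  obtain ⟨h1, h2⟩ := h
  have hi' : (1:ℤ) ≤ i := by exact_mod_cast hi
  have hj' : (1:ℤ) ≤ j := by exact_mod_cast hj
  have ha' : (1:ℤ) ≤ a := by exact_mod_cast ha
  have hb' : (1:ℤ) ≤ b := by exact_mod_cast hb
  have h1' : (i:ℤ)^2 + j = a^2 + b := by exact_mod_cast h1
  have h2' : (i:ℤ) + j^2 = a + b^2 := by exact_mod_cast h2
  -- d = i - a, e = j - b; d(i+a) = -e, d = -e(j+b)
  have key : ((i:ℤ) - a) * (((i:ℤ)+a)*((j:ℤ)+b) - 1) = 0 := by ring_nf; nlinarith [sq_nonneg ((i:ℤ)-a), sq_nonneg ((j:ℤ)-b)]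
  have hpos : ((i:ℤ)+a)*((j:ℤ)+b) - 1 ≠ 0 := by nlinarith
  have hd : (i:ℤ) = a := by
    rcases mul_eq_zero.mp key with h | h
    · linarith
    · exact absurd h hpos
  have he : (j:ℤ) = b := by nlinarith
  exact ⟨by exact_mod_cast hd, by exact_mod_cast he⟩
end

section
/- Let L : ℤ₊² → ℤᵈ be a link function with Δ_L < ∞, let ε₁, ..., ε_k ∈ {1, *} and let π be a partition of {1, ..., k} with |π| blocks. Define [π]_L to be the set of index vectors i = (i₁, ..., i_k) ∈ {1,...,n}^k such that L^{ε_u}(i_u, i_{u+1}) = L^{ε_v}(i_v, i_{v+1}) if and only if u and v lie in the same block of π (indices taken cyclically, i_{k+1} = i₁). Then #[π]_L ≤ Δ_L^{k - |π| - 1} · n^{|π| + 1}, so #[π]_L = O(n^{1+|π|}). -/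
/-!
Read the positions `1, …, k` from left to right. The value `i u` is free (at most `n` choices)
when `u = 1` or `u - 1` is the smallest element of its block. Otherwise `u - 1` has an earlier
blockmate `r`, so `L^ε(i (u-1), i u) = L^ε(i r, i (r+1))` is already known, and
`i u` lies in a row or column level set of `L`, which has at most `min Δ n` elements. There are
at most `|π| + 1` free positions.
-/

/-- `π` is a partition of the finite set `S`: blocks are nonempty subsets of `S`
and every element of `S` lies in exactly one block. -/
def IsPartitionOf (π : Finset (Finset ℕ)) (S : Finset ℕ) : Prop :=
  (∀ B ∈ π, B.Nonempty) ∧ (∀ B ∈ π, B ⊆ S) ∧ (∀ a ∈ S, ∃! B, B ∈ π ∧ a ∈ B)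

/-- `π` is a pair-partition of `S`: a partition all of whose blocks have two elements. -/
def IsPairPartitionOf (π : Finset (Finset ℕ)) (S : Finset ℕ) : Prop :=
  IsPartitionOf π S ∧ ∀ B ∈ π, B.card = 2

/-- `π` is non-crossing: there are no `u₁ < u₂ < u₃ < u₄` with `u₁, u₃` in one block
and `u₂, u₄` in a different block. -/
def IsNonCrossing (π : Finset (Finset ℕ)) : Prop :=
  ¬ ∃ u₁ u₂ u₃ u₄ : ℕ, u₁ < u₂ ∧ u₂ < u₃ ∧ u₃ < u₄ ∧
    ∃ B₁ ∈ π, ∃ B₂ ∈ π, B₁ ≠ B₂ ∧ u₁ ∈ B₁ ∧ u₃ ∈ B₁ ∧ u₂ ∈ B₂ ∧ u₄ ∈ B₂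

/-- Cyclic successor on `{1, ..., m}`: `u + 1` except `m ↦ 1`. -/
def cyc (m u : ℕ) : ℕ := if u = m then 1 else u + 1

/-- `u` and `v` lie in the same block of `π`. -/
def SameBlock (π : Finset (Finset ℕ)) (u v : ℕ) : Prop := ∃ B ∈ π, u ∈ B ∧ v ∈ B

/-- `L^ε(i,j)`: equal to `L(i,j)` when the symbol is `1` (here `true`) and to `L(j,i)`
when the symbol is `*` (here `false`), evaluated along the cyclic word. -/
def Leps {d : ℕ} (L : ℤ × ℤ → (Fin d → ℤ)) (m : ℕ) (ε : ℕ → Bool) (i : ℕ → ℤ)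
    (u : ℕ) : Fin d → ℤ :=
  if ε u then L (i u, i (cyc m u)) else L (i (cyc m u), i u)

open Finset

section SequentialChoice

variable {α : Type*} {S : Set (ℕ → α)} {s : Finset ℕ}

theorem Set.ncard_le_prod_of_sequential_choice (C : (ℕ → α) → ℕ → Finset α) (b : ℕ → ℕ)
    (hC : ∀ i ∈ S, ∀ j ∈ S, ∀ u ∈ s, (∀ v < u, i v = j v) → C i u = C j u)
    (hmem : ∀ i ∈ S, ∀ u ∈ s, i u ∈ C i u)
    (hcard : ∀ i ∈ S, ∀ u ∈ s, #(C i u) ≤ b u)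
    (hout : ∀ i ∈ S, ∀ j ∈ S, ∀ u ∉ s, i u = j u) :
    S.ncard ≤ ∏ u ∈ s, b u := by
  classical
  -- `i` is decoded position by position: `C i u` only depends on `i` below `u`.
  let code : (ℕ → α) → (s → ℕ) := fun i u => (C i u).toList.idxOf (i u)
  have hinj : Set.InjOn code S := by
    intro i hi j hj hcode
    funext u
    induction u using Nat.strong_induction_on with
    | _ u ih =>
      by_cases hu : u ∈ s
      · have hCij := hC i hi j hj u hu ih
        have hu_code : (C j u).toList.idxOf (i u) = (C j u).toList.idxOf (j u) := by
          simpa only [code, hCij] using congrFun hcode ⟨u, hu⟩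
        exact (List.idxOf_inj (mem_toList.2 (hCij ▸ hmem i hi u hu))).1 hu_code
      · exact hout i hi j hj u hu
  let codes : Finset (s → ℕ) := Fintype.piFinset fun u => Finset.range (b u)
  have hmaps : ∀ i ∈ S, code i ∈ (codes : Set (s → ℕ)) := by
    intro i hi
    simp only [codes, mem_coe, Fintype.mem_piFinset]
    intro u
    rw [Finset.mem_range]
    calc code i u < #(C i u) := by
          rw [← length_toList, List.idxOf_lt_length_iff, mem_toList]
          exact hmem i hi u u.2
      _ ≤ b u := hcard i hi u u.2
  calc S.ncard ≤ (codes : Set (s → ℕ)).ncard := Set.ncard_le_ncard_of_injOn code hmaps hinj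
    _ = ∏ u ∈ s, b u := by
        rw [Set.ncard_coe_finset, Fintype.card_piFinset]
        simp only [card_range]
        exact prod_coe_sort s b

end SequentialChoice

/-- For `w` in the ground set of `π`, `¬ HasEarlierBlockmate π w` says that `w` is a primary
element of `π`. -/
def HasEarlierBlockmate (π : Finset (Finset ℕ)) (w : ℕ) : Prop := ∃ r < w, SameBlock π w r

theorem card_filter_not_hasEarlierBlockmate_le {π : Finset (Finset ℕ)} {s : Finset ℕ}
    (hπ : IsPartitionOf π s) [DecidablePred (HasEarlierBlockmate π)] :
    #{w ∈ s | ¬ HasEarlierBlockmate π w} ≤ #π := by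
  refine card_le_card_of_forall_subsingleton (fun w B => w ∈ B) ?_ ?_
  · intro w hw
    obtain ⟨B, hB, -⟩ := hπ.2.2 w (mem_filter.1 hw).1
    exact ⟨B, hB⟩
  · rintro B hB w ⟨hw, hwB⟩ w' ⟨hw', hw'B⟩
    rcases lt_trichotomy w w' with hlt | heq | hgt
    · exact absurd ⟨w, hlt, B, hB, hw'B, hwB⟩ (mem_filter.1 hw').2
    · exact heq
    · exact absurd ⟨w', hgt, B, hB, hwB, hw'B⟩ (mem_filter.1 hw).2

theorem card_free_positions_le {π : Finset (Finset ℕ)} {k : ℕ}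
    (hπ : IsPartitionOf π (Icc 1 k)) [DecidablePred (HasEarlierBlockmate π)] :
    #{u ∈ Icc 1 k | ¬ HasEarlierBlockmate π (u - 1)} ≤ #π + 1 := by
  have hsub : {u ∈ Icc 1 k | ¬ HasEarlierBlockmate π (u - 1)} ⊆
      insert 1 ({w ∈ Icc 1 k | ¬ HasEarlierBlockmate π w}.image (· + 1)) := by
    intro u hu
    obtain ⟨hu, hfree⟩ := mem_filter.1 hu
    rw [mem_Icc] at hu
    rcases eq_or_ne u 1 with rfl | hu1
    · exact mem_insert_self _ _
    · refine mem_insert_of_mem (mem_image.2 ⟨u - 1, mem_filter.2 ⟨?_, hfree⟩, by omega⟩)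
      rw [mem_Icc]
      omega
  calc _ ≤ _ := card_le_card hsub
    _ ≤ _ := card_insert_le _ _
    _ ≤ #π + 1 := by
        gcongr
        exact card_image_le.trans (card_filter_not_hasEarlierBlockmate_le hπ)

theorem pow_mul_min_pow_le {n Δ g c k : ℕ} (hk : 0 < k) (hgc : g ≤ c + 1) (hgk : g ≤ k) :
    n ^ g * min Δ n ^ (k - g) ≤ Δ ^ (k - c - 1) * n ^ (c + 1) := by
  obtain ⟨m, hm⟩ : ∃ m, k - g = (k - c - 1) + m := ⟨k - g - (k - c - 1), by omega⟩
  have hn_pow : n ^ (g + m) ≤ n ^ (c + 1) := by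
    rcases n.eq_zero_or_pos with rfl | hn
    · rw [zero_pow (by omega)]
      exact Nat.zero_le _
    · exact Nat.pow_le_pow_right hn (by omega)
  calc n ^ g * min Δ n ^ (k - g)
      = min Δ n ^ (k - c - 1) * (n ^ g * min Δ n ^ m) := by rw [hm, pow_add]; ring
    _ ≤ Δ ^ (k - c - 1) * (n ^ g * n ^ m) := by gcongr <;> simp
    _ = Δ ^ (k - c - 1) * n ^ (g + m) := by rw [pow_add]
    _ ≤ Δ ^ (k - c - 1) * n ^ (c + 1) := Nat.mul_le_mul_left _ hn_pow

section Candidates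

variable {d : ℕ} (L : ℤ × ℤ → (Fin d → ℤ)) (k n : ℕ) (ε : ℕ → Bool) (π : Finset (Finset ℕ))

open scoped Classical in
/-- The possible values of `i u`, given `i` below `u`. -/
noncomputable def candidates (i : ℕ → ℤ) (u : ℕ) : Finset ℤ :=
  {x ∈ Icc (1 : ℤ) n | ∀ r < u - 1, SameBlock π (u - 1) r →
    (if ε (u - 1) then L (i (u - 1), x) else L (x, i (u - 1))) = Leps L k ε i r}

variable {L k n ε π}

theorem candidates_congr {i j : ℕ → ℤ} {u : ℕ} (hu : u ∈ Icc 1 k) (hij : ∀ v < u, i v = j v) :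
    candidates L k n ε π i u = candidates L k n ε π j u := by
  classical
  rw [mem_Icc] at hu
  have hLeps : ∀ r < u - 1, Leps L k ε i r = Leps L k ε j r := by
    intro r hr
    have hcyc : cyc k r = r + 1 := if_neg (by omega)
    rw [Leps, Leps, hcyc, hij r (by omega), hij (r + 1) (by omega)]
  unfold candidates
  refine filter_congr fun x _ => forall₂_congr fun r hr => ?_
  rw [hij (u - 1) (by omega), hLeps r hr]

theorem mem_candidates {i : ℕ → ℤ} (hπ : IsPartitionOf π (Icc 1 k))
    (hi : ∀ u ∈ Icc 1 k, i u ∈ Icc (1 : ℤ) n)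
    (hpat : ∀ u ∈ Icc 1 k, ∀ v ∈ Icc 1 k, (Leps L k ε i u = Leps L k ε i v ↔ SameBlock π u v))
    {u : ℕ} (hu : u ∈ Icc 1 k) :
    i u ∈ candidates L k n ε π i u := by
  classical
  refine mem_filter.2 ⟨hi u hu, fun r _ hsame => ?_⟩
  obtain ⟨B, hB, hwB, hrB⟩ := hsame
  have hcyc : cyc k (u - 1) = u := by
    rw [mem_Icc] at hu
    rw [cyc, if_neg (by omega)]
    omega
  have hedge := (hpat _ (hπ.2.1 B hB hwB) _ (hπ.2.1 B hB hrB)).2 ⟨B, hB, hwB, hrB⟩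
  rwa [Leps, hcyc] at hedge

theorem card_candidates_le {Δ : ℕ}
    (hΔ : ∀ t : Fin d → ℤ,
      (∀ j : ℤ, #{i ∈ Icc (1 : ℤ) n | L (i, j) = t} ≤ Δ) ∧
      (∀ i : ℤ, #{j ∈ Icc (1 : ℤ) n | L (i, j) = t} ≤ Δ))
    [DecidablePred (HasEarlierBlockmate π)] (i : ℕ → ℤ) (u : ℕ) :
    #(candidates L k n ε π i u) ≤
      if HasEarlierBlockmate π (u - 1) then min Δ n else n := by
  classical
  have hle_n : #(candidates L k n ε π i u) ≤ n :=
    (card_filter_le _ _).trans (by simp)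
  split_ifs with hdet
  · refine le_min ?_ hle_n
    obtain ⟨r, hr, hsame⟩ := hdet
    have hsub : candidates L k n ε π i u ⊆ {x ∈ Icc (1 : ℤ) n |
        (if ε (u - 1) then L (i (u - 1), x) else L (x, i (u - 1))) = Leps L k ε i r} :=
      monotone_filter_right _ fun _ _ hx => hx r hr hsame
    refine (card_le_card hsub).trans ?_
    cases ε (u - 1)
    · exact (hΔ _).1 _
    · exact (hΔ _).2 _
  · exact hle_n

end Candidates

/-- `π` a partition of `{1,...,k}` with `|π|` blocks, `Δ_L ≤ Δ < ∞`: the number of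
index vectors `i ∈ {1,...,n}^k` whose `L^ε`-coincidence pattern is exactly `π`
is at most `Δ^(k - |π| - 1) · n^(|π| + 1)`, i.e. `#[π]_L = O(n^{1+|π|})`. -/
theorem card_index_class_le {d : ℕ} (k n Δ : ℕ) (hk : 0 < k)
    (L : ℤ × ℤ → (Fin d → ℤ)) (ε : ℕ → Bool)
    (hΔ : ∀ t : Fin d → ℤ,
      (∀ j : ℤ, ((Finset.Icc (1 : ℤ) n).filter (fun i => L (i, j) = t)).card ≤ Δ) ∧
      (∀ i : ℤ, ((Finset.Icc (1 : ℤ) n).filter (fun j => L (i, j) = t)).card ≤ Δ))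
    (π : Finset (Finset ℕ)) (hπ : IsPartitionOf π (Finset.Icc 1 k)) :
    Set.ncard {i : ℕ → ℤ |
        (∀ u ∈ Finset.Icc 1 k, i u ∈ Finset.Icc (1 : ℤ) n) ∧
        (∀ u, u ∉ Finset.Icc 1 k → i u = 0) ∧
        (∀ u ∈ Finset.Icc 1 k, ∀ v ∈ Finset.Icc 1 k,
          (Leps L k ε i u = Leps L k ε i v ↔ SameBlock π u v))} ≤
      Δ ^ (k - π.card - 1) * n ^ (π.card + 1) := by
  classical
  set g := #{u ∈ Icc 1 k | ¬ HasEarlierBlockmate π (u - 1)}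
  have hdet : #{u ∈ Icc 1 k | HasEarlierBlockmate π (u - 1)} = k - g := by
    have := card_filter_add_card_filter_not (s := Icc 1 k) (HasEarlierBlockmate π <| · - 1)
    rw [Nat.card_Icc] at this
    omega
  calc _ ≤ ∏ u ∈ Icc 1 k, if HasEarlierBlockmate π (u - 1) then min Δ n else n :=
        Set.ncard_le_prod_of_sequential_choice (candidates L k n ε π) _
          (fun _ _ _ _ _ hu hij => candidates_congr hu hij)
          (fun _ hi _ hu => mem_candidates hπ hi.1 hi.2.2 hu)
          (fun i _ u _ => card_candidates_le hΔ i u)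
          (fun _ hi _ hj u hu => (hi.2.1 u hu).trans (hj.2.1 u hu).symm)
    _ = n ^ g * min Δ n ^ (k - g) := by
        rw [prod_ite, prod_const, prod_const, hdet, mul_comm]
    _ ≤ _ := pow_mul_min_pow_le hk (card_free_positions_le hπ)
        ((card_filter_le _ _).trans (Nat.card_Icc 1 k).le)
end
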